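/- arXiv:2307.02649 — 9 statements merged into one kernel-verified Lean document; each statement's English description precedes it below -/
import Mathlib

section
/- Let x, x̂, α, β : ℝ → ℍ be smooth with β invertible, x̂ = x + αβ⁻¹, and suppose α' = -x'·β and β' = -μ·(xᵈ)'·α where (xᵈ)' is a given function and μ ∈ ℝ. Then x̂ satisfies the Riccati equation x̂' = μ·(x̂ - x)·(xᵈ)'·(x̂ - x). -/
open Quaternion
open scoped Quaternion

/-- If `φ = (α, β)` is a parallel section, i.e. `α' = -x'·β` and
`β' = -μ·(xᵈ)'·α`, with `β` invertible, then `x̂ = x + αβ⁻¹` solves the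
Riccati equation `x̂' = μ·(x̂ - x)·(xᵈ)'·(x̂ - x)`. -/
theorem riccati_of_parallel_section
    (x α β x' xd' xh : ℝ → ℍ[ℝ]) (μ : ℝ)
    (hβne : ∀ t, β t ≠ 0)
    (hx : ∀ t, HasDerivAt x (x' t) t)
    (hα : ∀ t, HasDerivAt α (-(x' t * β t)) t)
    (hβ : ∀ t, HasDerivAt β (-(μ • (xd' t * α t))) t)
    (hxh : ∀ t, xh t = x t + α t * (β t)⁻¹) :
    ∀ t, HasDerivAt xh (μ • ((xh t - x t) * xd' t * (xh t - x t))) t := by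
  intro t
  have hne := hβne t
  have hinv : HasDerivAt (fun s => (β s)⁻¹)
      ((β t)⁻¹ * (μ • (xd' t * α t)) * (β t)⁻¹) t := by
    have := (hasFDerivAt_inv' (𝕜 := ℝ) hne).comp_hasDerivAt t (hβ t)
    simpa [Function.comp_def, neg_mul, mul_neg] using this
  have h := (hx t).add ((hα t).mul hinv)
  have hfun : (fun s => x s + α s * (β s)⁻¹) = xh := by
    funext s; rw [hxh s]
  rw [show (x + α * fun s => (β s)⁻¹) = xh from hfun] at h
  refine h.congr_deriv ?_
  rw [hxh t]
  have e1 : x t + α t * (β t)⁻¹ - x t = α t * (β t)⁻¹ := add_sub_cancel_left _ _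
  rw [e1]
  simp only [neg_mul, mul_assoc, inv_mul_cancel₀ hne, mul_one,
    mul_smul_comm, smul_mul_assoc]
  rw [mul_inv_cancel₀ hne, mul_one]
  abel
end

section
/- Let x : ℝ → ℍ be smooth with x' nonvanishing, and let x̂ solve the Riccati equation x̂' = μ·T·(xᵈ)'·T with T := x̂ - x nonvanishing. If β : ℝ → ℍ solves β' = -T⁻¹·x̂'·β and α := T·β, then α' = -x'·β and β' = -μ·(xᵈ)'·α, where (xᵈ)' := q·(x')⁻¹ for a given real-valued q and x̂' = μ T (xᵈ)' T. -/
open Quaternion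
open scoped Quaternion

/-- If `x̂` solves the Riccati equation `x̂' = μ T (xᵈ)' T` with `T = x̂ - x`
nonvanishing, `β` solves `β' = -T⁻¹ x̂' β`, and `α := T β`, then
`α' = -x' β` and `β' = -μ (xᵈ)' α`, where `(xᵈ)' = q (x')⁻¹`. -/
theorem parallel_section_of_riccati
    (x xh β x' : ℝ → ℍ[ℝ]) (q : ℝ → ℝ) (μ : ℝ)
    (hx'ne : ∀ t, x' t ≠ 0)
    (hx : ∀ t, HasDerivAt x (x' t) t)
    (T : ℝ → ℍ[ℝ]) (hT : ∀ t, T t = xh t - x t) (hTne : ∀ t, T t ≠ 0)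
    (xd' : ℝ → ℍ[ℝ]) (hxd : ∀ t, xd' t = ((q t : ℝ) : ℍ[ℝ]) * (x' t)⁻¹)
    (hxh : ∀ t, HasDerivAt xh (μ • (T t * xd' t * T t)) t)
    (hβ : ∀ t, HasDerivAt β (-((T t)⁻¹ * (μ • (T t * xd' t * T t)) * β t)) t)
    (α : ℝ → ℍ[ℝ]) (hα : ∀ t, α t = T t * β t) :
    (∀ t, HasDerivAt α (-(x' t * β t)) t) ∧
      (∀ t, HasDerivAt β (-(μ • (xd' t * α t))) t) := by
  have hTfun : T = fun s => xh s - x s := funext hT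
  have hαfun : α = fun s => T s * β s := funext hα
  have hT' : ∀ t, HasDerivAt T (μ • (T t * xd' t * T t) - x' t) t := by
    intro t
    have h := (hxh t).sub (hx t)
    rwa [show xh - x = T from (funext hT).symm] at h
  constructor
  · intro t
    have h := (hT' t).mul (hβ t)
    rw [show T * β = α from (funext hα).symm] at h
    convert h using 1
    case e'_5 => rfl
    rw [mul_neg, ← mul_assoc, ← mul_assoc, mul_inv_cancel₀ (hTne t), one_mul,
      sub_mul]
    abel
  · intro t
    have h := hβ t
    convert h using 1
    rw [hα t, mul_smul_comm, smul_mul_assoc,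
      show T t * xd' t * T t = T t * (xd' t * T t) from mul_assoc _ _ _,
      ← mul_assoc ((T t)⁻¹), inv_mul_cancel₀ (hTne t), one_mul, mul_assoc]
end

section
/- Let x : ℝ → Im ℍ be a smooth curve in the imaginary quaternions, x̂ = x + αβ⁻¹ a Darboux transform arising from a parallel section φ = (α, β) (i.e., α' = -x'β, β' = -μ(xᵈ)'α with (xᵈ)' = q(x')⁻¹, q real). Then the quantity (φ,φ) := conj(α)β + conj(β)α is constant in t. -/
open Quaternion
open scoped Quaternion

instance : StarModule ℝ ℍ[ℝ] :=
  ⟨fun r q => by ext <;> simp⟩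

/-- For a curve `x` in the imaginary quaternions and a parallel section
`φ = (α, β)` (i.e. `α' = -x'β`, `β' = -μ(xᵈ)'α` with `(xᵈ)' = q(x')⁻¹`, `q`
real), the quantity `(φ,φ) = conj α * β + conj β * α` is constant. -/
theorem herm_const_of_parallel
    (x α β x' : ℝ → ℍ[ℝ]) (q : ℝ → ℝ) (μ : ℝ)
    (hxim : ∀ t, (x t).re = 0)
    (hx : ∀ t, HasDerivAt x (x' t) t)
    (hx'ne : ∀ t, x' t ≠ 0)
    (hqne : ∀ t, q t ≠ 0)
    (hα : ∀ t, HasDerivAt α (-(x' t * β t)) t)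
    (hβ : ∀ t, HasDerivAt β (-(μ • (((q t : ℝ) : ℍ[ℝ]) * (x' t)⁻¹ * α t))) t) :
    ∀ t s : ℝ,
      star (α t) * β t + star (β t) * α t
        = star (α s) * β s + star (β s) * α s := by
  -- x' is purely imaginary: star (x' t) = -(x' t)
  have hstarx' : ∀ t, star (x' t) = -(x' t) := by
    intro t
    have h1 : HasDerivAt (fun u => star (x u) + x u) (star (x' t) + x' t) t :=
      (hx t).star.add (hx t)
    have h2 : (fun u => star (x u) + x u) = fun _ => (0 : ℍ[ℝ]) := by
      funext u
      rw [Quaternion.star_eq_two_re_sub, hxim u]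
      simp
    rw [h2] at h1
    have h3 : HasDerivAt (fun _ : ℝ => (0 : ℍ[ℝ])) 0 t := hasDerivAt_const _ _
    have := h1.unique h3
    linear_combination (norm := module) this
  have hstarinv : ∀ t, star ((x' t)⁻¹) = -((x' t)⁻¹) := by
    intro t
    rw [star_inv₀, hstarx', inv_neg]
  -- the Hermitian pairing has derivative zero
  set g : ℝ → ℍ[ℝ] := fun t => star (α t) * β t + star (β t) * α t with hg
  have hderiv : ∀ t, HasDerivAt g 0 t := by
    intro t
    have h := (((hα t).star.mul (hβ t)).add ((hβ t).star.mul (hα t)))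
    refine HasDerivAt.congr_deriv (f := g) h ?_
    symm
    have hq : ∀ y : ℍ[ℝ], (((q t : ℝ) : ℍ[ℝ])) * y = y * (((q t : ℝ) : ℍ[ℝ])) :=
      fun y => (Quaternion.coe_commutes _ _)
    simp only [Quaternion.coe_mul_eq_smul, smul_mul_assoc, mul_smul_comm, Quaternion.star_smul,
      star_mul, star_neg, hstarinv t, hstarx' t, mul_neg, neg_mul, neg_neg, smul_smul,
      mul_assoc]
    module
  have hdiff : Differentiable ℝ g := fun t => (hderiv t).differentiableAt
  have hzero : ∀ t, deriv g t = 0 := fun t => (hderiv t).deriv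
  intro t s
  exact is_const_of_deriv_eq_zero hdiff hzero t s
end

section
/- Let x : ℝ → Im ℍ, and suppose x̂ = x + αβ⁻¹ with α, β as in the Darboux parallel-section system and conj(α)β + conj(β)α constant. If x̂(t₀) ∈ Im ℍ for some t₀, then x̂(t) ∈ Im ℍ for all t. -/
open Quaternion
open scoped Quaternion

lemma star_mul_add_re (a b : ℍ[ℝ]) :
    (star a * b + star b * a).re = 2 * (a * star b).re := by
  simp [Quaternion.re_mul, Quaternion.re_add]
  ring

lemma mul_inv_re (a b : ℍ[ℝ]) :
    (a * b⁻¹).re = (Quaternion.normSq b)⁻¹ * (a * star b).re := by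
  rw [Quaternion.inv_def, mul_smul_comm, Quaternion.re_smul, smul_eq_mul]

/-- If `x` is imaginary, `x̂ = x + αβ⁻¹` with `conj α * β + conj β * α`
constant, and `x̂(t₀)` is imaginary for some `t₀`, then `x̂(t)` is imaginary
for all `t`. -/
theorem darboux_stays_imaginary
    (x α β xh : ℝ → ℍ[ℝ])
    (hxim : ∀ t, (x t).re = 0)
    (hβne : ∀ t, β t ≠ 0)
    (hxh : ∀ t, xh t = x t + α t * (β t)⁻¹)
    (hconst : ∀ t s : ℝ,
      star (α t) * β t + star (β t) * α t
        = star (α s) * β s + star (β s) * α s)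
    (t₀ : ℝ) (h0 : (xh t₀).re = 0) :
    ∀ t, (xh t).re = 0 := by
  have h0' : (α t₀ * (β t₀)⁻¹).re = 0 := by
    have := h0
    rw [hxh t₀, Quaternion.re_add, hxim t₀, zero_add] at this
    exact this
  have hstar0 : (α t₀ * star (β t₀)).re = 0 := by
    rw [mul_inv_re] at h0'
    have hns : (Quaternion.normSq (β t₀) : ℝ) ≠ 0 := by
      simpa [Quaternion.normSq_eq_zero] using hβne t₀
    rcases mul_eq_zero.mp h0' with h | h
    · exact absurd h (inv_ne_zero hns)
    · exact h
  intro t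
  rw [hxh t, Quaternion.re_add, hxim t, zero_add, mul_inv_re]
  have hc : (α t * star (β t)).re = 0 := by
    have := congrArg QuaternionAlgebra.re (hconst t t₀)
    rw [star_mul_add_re, star_mul_add_re, hstar0, mul_zero] at this
    linarith
  rw [hc, mul_zero]
end

section
/- Let x(t) = j·exp(i t) ∈ ℍ and μ ∈ ℝ with s := √(1-4μ). For constants c₁⁺, c₁⁻ ∈ ℂ (not both such that the denominator vanishes), the curve x̂(t) = j·( -exp(i t)·( c₁⁺(1-s)exp(i s t) + c₁⁻(1+s) ) · ( c₁⁺(1+s)exp(i s t) + c₁⁻(1-s) )⁻¹ ) satisfies the Riccati equation x̂' = μ(x̂-x)(x')⁻¹(x̂-x). -/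
open Quaternion
open scoped Quaternion

/-- The complex exponential `exp(𝕚 t) = cos t + 𝕚 sin t` inside `ℍ`. -/
noncomputable def qexp (t : ℝ) : ℍ[ℝ] := ⟨Real.cos t, Real.sin t, 0, 0⟩

/-- The derivative of `qexp`: `-sin t + 𝕚 cos t` inside `ℍ`. -/
noncomputable def qexp' (t : ℝ) : ℍ[ℝ] := ⟨-Real.sin t, Real.cos t, 0, 0⟩

/-- The quaternion `𝕛`. -/
def jq : ℍ[ℝ] := ⟨0, 0, 1, 0⟩

/-- The embedding `ℂ = span{1, 𝕚} ⊂ ℍ`. -/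
def cq (z : ℂ) : ℍ[ℝ] := ⟨z.re, z.im, 0, 0⟩

/-! ### Auxiliary lemmas about `cq` and `jq` -/

@[simp] lemma cq_re (z : ℂ) : (cq z).re = z.re := rfl
@[simp] lemma cq_imI (z : ℂ) : (cq z).imI = z.im := rfl
@[simp] lemma cq_imJ (z : ℂ) : (cq z).imJ = 0 := rfl
@[simp] lemma cq_imK (z : ℂ) : (cq z).imK = 0 := rfl
@[simp] lemma jq_re : jq.re = 0 := rfl
@[simp] lemma jq_imI : jq.imI = 0 := rfl
@[simp] lemma jq_imJ : jq.imJ = 1 := rfl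
@[simp] lemma jq_imK : jq.imK = 0 := rfl

lemma cq_add (z w : ℂ) : cq (z + w) = cq z + cq w := by ext <;> simp
lemma cq_mul (z w : ℂ) : cq (z * w) = cq z * cq w := by ext <;> simp
lemma cq_one : cq 1 = 1 := by ext <;> simp
lemma cq_zero : cq 0 = 0 := by ext <;> simp
lemma cq_neg (z : ℂ) : cq (-z) = -cq z := by ext <;> simp
lemma cq_sub (z w : ℂ) : cq (z - w) = cq z - cq w := by ext <;> simp
lemma cq_smul (r : ℝ) (z : ℂ) : cq (r • z) = r • cq z := by
  ext <;> simp [Complex.real_smul]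

lemma cq_inj {z w : ℂ} (h : cq z = cq w) : z = w := by
  have h1 := congrArg QuaternionAlgebra.re h
  have h2 := congrArg QuaternionAlgebra.imI h
  simp [cq] at h1 h2
  exact Complex.ext h1 h2

lemma cq_inv (z : ℂ) : cq z⁻¹ = (cq z)⁻¹ := by
  rcases eq_or_ne z 0 with rfl | h
  · simp [cq_zero]
  · symm; apply inv_eq_of_mul_eq_one_right
    rw [← cq_mul, mul_inv_cancel₀ h, cq_one]

lemma jq_mul_jq : jq * jq = -1 := by ext <;> simp
lemma jq_inv : jq⁻¹ = -jq := by
  apply inv_eq_of_mul_eq_one_right; ext <;> simp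

lemma jq_cq_sandwich (a b c : ℂ) :
    (jq * cq a) * (jq * cq b)⁻¹ * (jq * cq c) = jq * cq (a * b⁻¹ * c) := by
  have key : (-jq) * (jq * cq c) = cq c := by
    rw [← mul_assoc, neg_mul, jq_mul_jq]; simp
  rw [mul_inv_rev, jq_inv, cq_mul, cq_mul, cq_inv]
  simp only [mul_assoc, key]

lemma cq_real (r : ℝ) : cq (r : ℂ) = (r : ℍ[ℝ]) := by
  ext <;> simp [cq]

/-! ### The complex model of the curve -/

open Complex

noncomputable def Ef (t : ℝ) : ℂ := Complex.exp (t * I)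
noncomputable def uf (s : ℝ) (t : ℝ) : ℂ := Complex.exp ((s:ℂ) * t * I)

lemma hasDerivAt_Ef (t : ℝ) : HasDerivAt (fun x => Ef x) (I * Ef t) t := by
  have h : HasDerivAt (fun x : ℝ => (x:ℂ) * I) I t := by
    simpa using (Complex.ofRealCLM.hasDerivAt (x := t)).mul_const I
  simpa [Ef, mul_comm] using h.cexp

lemma hasDerivAt_uf (s : ℝ) (t : ℝ) : HasDerivAt (fun x => uf s x) ((s:ℂ) * I * uf s t) t := by
  have h : HasDerivAt (fun x : ℝ => (s:ℂ) * x * I) ((s:ℂ) * I) t := by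
    simpa [mul_assoc] using ((Complex.ofRealCLM.hasDerivAt (x := t)).const_mul (s:ℂ)).mul_const I
  simpa [uf, mul_comm, mul_assoc, mul_left_comm] using h.cexp

noncomputable def Nf (s : ℝ) (cp cm : ℂ) (t : ℝ) : ℂ := cp * (1 - (s:ℂ)) * uf s t + cm * (1 + (s:ℂ))
noncomputable def Df (s : ℝ) (cp cm : ℂ) (t : ℝ) : ℂ := cp * (1 + (s:ℂ)) * uf s t + cm * (1 - (s:ℂ))
noncomputable def Ff (s : ℝ) (cp cm : ℂ) (t : ℝ) : ℂ := -Ef t * Nf s cp cm t / Df s cp cm t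

lemma aux_frac (m a b c : ℂ) (hb : b ≠ 0) (hc : c ≠ 0) :
    m * (a / b * c⁻¹ * (a / b)) * b ^ 2 = m * a ^ 2 * c⁻¹ := by
  field_simp

lemma hasDerivAt_Ff (μ s : ℝ) (cp cm : ℂ) (t : ℝ)
    (hs2 : (s:ℂ)^2 = 1 - 4*μ)
    (hDt : Df s cp cm t ≠ 0) :
    HasDerivAt (fun x => Ff s cp cm x)
      ((μ:ℂ) * ((Ff s cp cm t - Ef t) * (I * Ef t)⁻¹ * (Ff s cp cm t - Ef t))) t := by
  have hN : HasDerivAt (fun x => Nf s cp cm x) (cp * (1 - (s:ℂ)) * ((s:ℂ) * I * uf s t)) t :=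
    ((hasDerivAt_uf s t).const_mul _).add_const _
  have hD : HasDerivAt (fun x => Df s cp cm x) (cp * (1 + (s:ℂ)) * ((s:ℂ) * I * uf s t)) t :=
    ((hasDerivAt_uf s t).const_mul _).add_const _
  have hF := ((hasDerivAt_Ef t).neg.mul hN).div hD hDt
  have hE0 : Ef t ≠ 0 := Complex.exp_ne_zero _
  have hIE : I * Ef t ≠ 0 := mul_ne_zero Complex.I_ne_zero hE0
  have hmu : (μ:ℂ) = (1 - (s:ℂ)^2)/4 := by linear_combination hs2/4
  refine hF.congr_deriv (Eq.symm ?_)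
  rw [eq_div_iff (pow_ne_zero 2 hDt)]
  have h1 : Ff s cp cm t - Ef t = (-(Ef t * (Nf s cp cm t + Df s cp cm t))) / Df s cp cm t := by
    rw [Ff]
    field_simp
    ring
  rw [h1, aux_frac _ _ _ _ hDt hIE, hmu]
  simp only [Nf, Df, mul_inv, Complex.inv_I, Pi.neg_apply, Pi.mul_apply]
  field_simp [hE0]
  ring_nf

/-! ### Bridges between the quaternionic and complex pictures -/

lemma cq_Ef (x : ℝ) : cq (Ef x) = qexp x := by
  ext <;> simp [cq, qexp, Ef]

lemma cq_I_Ef (x : ℝ) : cq (I * Ef x) = qexp' x := by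
  ext <;> simp [cq, qexp', Ef]

lemma cq_uf (s x : ℝ) : cq (uf s x) = qexp (s * x) := by
  have : uf s x = Ef (s * x) := by
    unfold uf Ef; push_cast; ring_nf
  rw [this, cq_Ef]

/-- `cq` as a continuous real-linear map postcomposed with left multiplication by `jq`. -/
noncomputable def Lcq : ℂ →L[ℝ] ℍ[ℝ] :=
  LinearMap.toContinuousLinearMap
    { toFun := fun z => jq * cq z
      map_add' := fun a b => by
        show jq * cq (a + b) = jq * cq a + jq * cq b
        rw [cq_add, mul_add]
      map_smul' := fun r z => by
        show jq * cq (r • z) = r • (jq * cq z)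
        rw [cq_smul, mul_smul_comm] }

lemma Lcq_apply (z : ℂ) : Lcq z = jq * cq z := rfl

/-- For the circle `x(t) = 𝕛 exp(𝕚 t)` polarised by `dt²`, with `s = √(1-4μ)`,
the curve
`x̂(t) = 𝕛(-exp(𝕚t)(c₁⁺(1-s)exp(𝕚st) + c₁⁻(1+s))(c₁⁺(1+s)exp(𝕚st) + c₁⁻(1-s))⁻¹)`
solves the Riccati equation `x̂' = μ(x̂-x)(x')⁻¹(x̂-x)`. -/
theorem circle_darboux_riccati (μ : ℝ) (hμ : 1 - 4 * μ ≥ 0) (cp cm : ℂ)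
    (s : ℝ) (hs : s = Real.sqrt (1 - 4 * μ))
    (xh : ℝ → ℍ[ℝ])
    (hden : ∀ t : ℝ,
      cq cp * ((1 + s : ℝ) : ℍ[ℝ]) * qexp (s * t)
        + cq cm * ((1 - s : ℝ) : ℍ[ℝ]) ≠ 0)
    (hxh : ∀ t : ℝ, xh t =
      jq * (-(qexp t)
        * (cq cp * ((1 - s : ℝ) : ℍ[ℝ]) * qexp (s * t)
            + cq cm * ((1 + s : ℝ) : ℍ[ℝ]))
        * (cq cp * ((1 + s : ℝ) : ℍ[ℝ]) * qexp (s * t)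
            + cq cm * ((1 - s : ℝ) : ℍ[ℝ]))⁻¹)) :
    ∀ t : ℝ, HasDerivAt xh
      (μ • ((xh t - jq * qexp t)
        * (jq * qexp' t)⁻¹
        * (xh t - jq * qexp t))) t := by
  have hs2 : (s:ℂ)^2 = 1 - 4*μ := by
    have : s^2 = 1 - 4*μ := by rw [hs, Real.sq_sqrt hμ]
    exact_mod_cast congrArg (fun r : ℝ => (r : ℂ)) this
  -- quaternionic pieces as `cq` of complex pieces
  have hNq : ∀ t : ℝ, cq cp * ((1 - s : ℝ) : ℍ[ℝ]) * qexp (s * t)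
      + cq cm * ((1 + s : ℝ) : ℍ[ℝ]) = cq (Nf s cp cm t) := by
    intro t
    rw [Nf, cq_add, cq_mul, cq_mul, cq_mul, cq_uf, ← cq_real (1-s), ← cq_real (1+s)]
    norm_cast
  have hDq : ∀ t : ℝ, cq cp * ((1 + s : ℝ) : ℍ[ℝ]) * qexp (s * t)
      + cq cm * ((1 - s : ℝ) : ℍ[ℝ]) = cq (Df s cp cm t) := by
    intro t
    rw [Df, cq_add, cq_mul, cq_mul, cq_mul, cq_uf, ← cq_real (1+s), ← cq_real (1-s)]
    norm_cast
  have hDt : ∀ t : ℝ, Df s cp cm t ≠ 0 := by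
    intro t h0
    exact hden t (by rw [hDq t, h0, cq_zero])
  -- `xh` is `Lcq ∘ Ff`
  have hfun : xh = fun t => Lcq (Ff s cp cm t) := by
    funext t
    rw [hxh t, Lcq_apply, Ff, div_eq_mul_inv, cq_mul, cq_mul, cq_inv, cq_neg, cq_Ef,
      ← hNq t, ← hDq t]
  intro t
  rw [hfun]
  have hder := (Lcq.hasFDerivAt).comp_hasDerivAt t
    (hasDerivAt_Ff μ s cp cm t hs2 (hDt t))
  refine hder.congr_deriv (Eq.symm ?_)
  simp only [Function.comp_def]
  rw [Lcq_apply, Lcq_apply, ← cq_Ef, ← cq_I_Ef, ← mul_sub, ← cq_sub,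
    jq_cq_sandwich, ← mul_smul_comm, ← cq_smul]
  congr 1
end

section
/- Let x : ℝ → ℍ be arc-length polarised, i.e. |x'|² = q, so that (xᵈ)' = conj(x'). Let x̂ solve the Riccati equation x̂' = μ T conj(x') T with T = x̂ - x and μ ≠ 0. Then d/dt |T|² = 2μ·Re(conj(T)·x')·(|T|² - 1/μ). -/
open Quaternion
open scoped Quaternion

/-- For an arc-length polarised curve `x` (`|x'|² = q`, so `(xᵈ)' = conj x'`)
and `x̂` solving the Riccati equation `x̂' = μ T conj(x') T` with `T = x̂ - x`,
one has `d/dt |T|² = 2μ Re(conj(T) x') (|T|² - 1/μ)`. -/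
theorem deriv_normSq_T
    (x xh x' : ℝ → ℍ[ℝ]) (q : ℝ → ℝ) (μ : ℝ) (hμ : μ ≠ 0)
    (hx : ∀ t, HasDerivAt x (x' t) t)
    (harc : ∀ t, Quaternion.normSq (x' t) = q t)
    (T : ℝ → ℍ[ℝ]) (hT : ∀ t, T t = xh t - x t)
    (hxh : ∀ t, HasDerivAt xh (μ • (T t * star (x' t) * T t)) t) :
    ∀ t, HasDerivAt (fun u => Quaternion.normSq (T u))
      (2 * μ * (star (T t) * x' t).re * (Quaternion.normSq (T t) - 1 / μ)) t := by
  intro t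
  have hTfun : T = fun u => xh u - x u := funext hT
  have hT' : HasDerivAt T (μ • (T t * star (x' t) * T t) - x' t) t := by
    refine ((hxh t).sub (hx t)).congr_of_eventuallyEq ?_
    filter_upwards with u using hT u
  have h := hT'.inner ℝ hT'
  have heq : (inner ℝ (T t) (μ • (T t * star (x' t) * T t) - x' t) : ℝ) +
      inner ℝ (μ • (T t * star (x' t) * T t) - x' t) (T t) =
      2 * μ * (star (T t) * x' t).re * (Quaternion.normSq (T t) - 1 / μ) := by
    simp only [Quaternion.inner_def, Quaternion.normSq_def]
    simp only [Quaternion.re_mul, Quaternion.re_sub, Quaternion.imI_sub, Quaternion.imJ_sub,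
      Quaternion.imK_sub, Quaternion.re_smul, Quaternion.imI_smul, Quaternion.imJ_smul,
      Quaternion.imK_smul, Quaternion.re_star, Quaternion.imI_star, Quaternion.imJ_star,
      Quaternion.imK_star, Quaternion.imI_mul, Quaternion.imJ_mul, Quaternion.imK_mul,
      smul_eq_mul]
    field_simp
    ring
  have h2 : (fun u => Quaternion.normSq (T u)) = fun u => (inner ℝ (T u) (T u) : ℝ) := by
    funext u; rw [Quaternion.inner_self]
  rw [h2, ← heq]
  exact h
end

section
/- Let x(t) = exp(i t) ∈ ℂ, s = √(1-4μ) with 0 < μ < 1/4, and χ ∈ ℂ. Define x̂(t) = exp(i t)·( χ(s-1)exp(i s t) - (s+1) ) · ( χ(s+1)exp(i s t) - (s-1) )⁻¹. Then |x̂(t) - x(t)|² = 1/μ for all t if and only if it holds at t = 0. -/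
lemma circleton_aux (μ s c : ℝ) (hs2 : s^2 = 1 - 4*μ) (w : ℂ)
    (hw : Complex.normSq w = c) :
    4*μ*Complex.normSq (w+1) - Complex.normSq (((s:ℂ)+1)*w - ((s:ℂ)-1)) =
      4*μ*(c+1) - ((s+1)^2*c + (s-1)^2) := by
  simp only [Complex.normSq_apply, Complex.add_re, Complex.add_im, Complex.sub_re,
    Complex.sub_im, Complex.mul_re, Complex.mul_im, Complex.one_re, Complex.one_im,
    Complex.ofReal_re, Complex.ofReal_im] at *
  linear_combination (4*μ - (s+1)^2) * hw + 2*w.re*hs2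

/-- For the circle `x(t) = exp(i t)` in `ℂ`, `0 < μ < 1/4`, `s = √(1-4μ)`,
and the explicit Darboux transform `x̂`, one has `|x̂ - x|² = 1/μ` everywhere
iff it holds at `t = 0`. -/
theorem circleton_condition (μ : ℝ) (h1 : 0 < μ) (h2 : μ < 1/4) (χ : ℂ)
    (s : ℝ) (hs : s = Real.sqrt (1 - 4 * μ))
    (xh : ℝ → ℂ)
    (hden : ∀ t : ℝ,
      χ * ((s : ℂ) + 1) * Complex.exp (Complex.I * s * t) - ((s : ℂ) - 1) ≠ 0)
    (hxh : ∀ t : ℝ, xh t =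
      Complex.exp (Complex.I * t)
        * (χ * ((s : ℂ) - 1) * Complex.exp (Complex.I * s * t) - ((s : ℂ) + 1))
        * (χ * ((s : ℂ) + 1) * Complex.exp (Complex.I * s * t) - ((s : ℂ) - 1))⁻¹) :
    (∀ t : ℝ, Complex.normSq (xh t - Complex.exp (Complex.I * t)) = 1 / μ) ↔
      Complex.normSq (xh 0 - 1) = 1 / μ := by
  have hs2 : s^2 = 1 - 4*μ := by
    rw [hs, Real.sq_sqrt]; linarith
  have cond : ∀ t : ℝ, Complex.normSq (xh t - Complex.exp (Complex.I * t)) = 1 / μ ↔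
      4*μ*(Complex.normSq χ + 1) - ((s+1)^2*Complex.normSq χ + (s-1)^2) = 0 := by
    intro t
    set E := Complex.exp (Complex.I * s * t) with hE
    set D := χ * ((s : ℂ) + 1) * E - ((s : ℂ) - 1) with hD
    have hDne : D ≠ 0 := hden t
    have hEnorm : Complex.normSq E = 1 := by
      rw [hE, Complex.normSq_eq_norm_sq, Complex.norm_exp]
      simp
    have hexp : Complex.normSq (Complex.exp (Complex.I * t)) = 1 := by
      rw [Complex.normSq_eq_norm_sq, Complex.norm_exp]
      simp
    have hw : Complex.normSq (χ * E) = Complex.normSq χ := by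
      rw [Complex.normSq_mul, hEnorm, mul_one]
    have hrw : xh t - Complex.exp (Complex.I * t)
        = Complex.exp (Complex.I * t) * ((-2:ℂ) * (χ*E+1)) * D⁻¹ := by
      rw [hxh t, ← hE, ← hD]
      field_simp
      ring
    have hDnorm : Complex.normSq D ≠ 0 := by
      simpa [Complex.normSq_eq_zero] using hDne
    have hDpos : 0 < Complex.normSq D := lt_of_le_of_ne (Complex.normSq_nonneg D) (Ne.symm hDnorm)
    rw [hrw, Complex.normSq_mul, Complex.normSq_mul, Complex.normSq_inv, hexp, one_mul]
    have h4 : Complex.normSq ((-2:ℂ) * (χ*E+1)) = 4 * Complex.normSq (χ*E+1) := by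
      rw [Complex.normSq_mul]; norm_num
    rw [h4]
    rw [mul_inv_eq_iff_eq_mul₀ hDnorm]
    have key := circleton_aux μ s (Complex.normSq χ) hs2 (χ*E) hw
    have hDrw : ((s:ℂ)+1)*(χ*E) - ((s:ℂ)-1) = D := by rw [hD]; ring
    rw [hDrw] at key
    constructor
    · intro h
      have : 4 * μ * Complex.normSq (χ*E+1) = Complex.normSq D := by
        field_simp at h
        linarith [h]
      linarith [key, this]
    · intro h
      have : 4 * μ * Complex.normSq (χ*E+1) = Complex.normSq D := by linarith [key]
      rw [← this]
      field_simp
  constructor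
  · intro h
    have h0 := h 0
    simpa using h0
  · intro h t
    rw [cond t]
    rw [← cond 0]
    simpa using h
end

section
/- Let a, b : ℤ → ℍ with b_n invertible, satisfying on each edge (ij): a_i - a_j = -dx_{ij}·b_i and b_i - b_j = -μ·dxᵈ_{ij}·a_i. Then T_n := a_n·b_n⁻¹ satisfies the discrete Riccati equation T_i - T_j = -dx_{ij} + μ·T_j·dxᵈ_{ij}·T_i. -/
open Quaternion
open scoped Quaternion

/-- If `(a, b)` satisfies the discrete parallel-section system
`a_i - a_j = -dx_{ij} b_i`, `b_i - b_j = -μ dxᵈ_{ij} a_i` with `b` invertible,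
then `T = a b⁻¹` satisfies the discrete Riccati equation
`T_i - T_j = -dx_{ij} + μ T_j dxᵈ_{ij} T_i`. -/
theorem discrete_riccati_of_parallel
    (x a b : ℤ → ℍ[ℝ]) (m : ℤ → ℝ) (μ : ℝ)
    (hm : ∀ n, m n ≠ 0) (hx : ∀ n, x n - x (n + 1) ≠ 0)
    (hb : ∀ n, b n ≠ 0)
    (ha : ∀ n, a n - a (n + 1) = -((x n - x (n + 1)) * b n))
    (hbd : ∀ n, b n - b (n + 1)
      = -(μ • (((m n)⁻¹ • (x n - x (n + 1))⁻¹) * a n)))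
    (T : ℤ → ℍ[ℝ]) (hT : ∀ n, T n = a n * (b n)⁻¹) :
    ∀ n, T n - T (n + 1)
      = -(x n - x (n + 1))
        + μ • (T (n + 1) * ((m n)⁻¹ • (x n - x (n + 1))⁻¹) * T n) := by
  intro n
  have hbn := hb n
  have hbn1 := hb (n + 1)
  have key : μ • (((m n)⁻¹ • (x n - x (n + 1))⁻¹) * a n) = b (n + 1) - b n := by
    have h := hbd n
    rw [← neg_sub] at h
    rw [← neg_inj, ← h]
  have hTn : T n * b n = a n := by
    rw [hT n, mul_assoc, inv_mul_cancel₀ hbn, mul_one]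
  have hTn1 : T (n + 1) * b (n + 1) = a (n + 1) := by
    rw [hT (n + 1), mul_assoc, inv_mul_cancel₀ hbn1, mul_one]
  apply mul_right_cancel₀ hbn
  rw [sub_mul, add_mul, hTn]
  have hμ : μ • (T (n + 1) * ((m n)⁻¹ • (x n - x (n + 1))⁻¹) * T n) * b n
      = T (n + 1) * (μ • (((m n)⁻¹ • (x n - x (n + 1))⁻¹) * a n)) := by
    rw [smul_mul_assoc, mul_assoc, mul_assoc, hTn, mul_smul_comm, ← mul_assoc]
  rw [hμ, key, neg_mul, ← ha n, mul_sub, hTn1]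
  abel
end

section
/- Let x, x̂ : ℤ → ℍ satisfy the discrete Riccati equation with T = x̂ - x, T_i invertible, x arc-length polarised (|dx_{ij}|² = 1/m_{ij}), and |T_i|² = 1/μ with μ > 0 at vertex i. Then on the edge (ij): |1 + μ·conj(dx_{ij})·T_i|² = μ·|x̂_i - x_j|², and consequently |x̂_i - x̂_j|² = 1/m_{ij} and |T_j|² = 1/μ. -/
open Quaternion
open scoped Quaternion

/-- For a discrete arc-length polarised curve `x` (`|dx_{ij}|² = 1/m_{ij}`,
so `dxᵈ_{ij} = conj dx_{ij}`) and `x̂` satisfying the discrete Riccati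
equation with `|T_i|² = 1/μ`, `μ > 0`, one has
`|1 + μ conj(dx_{ij}) T_i|² = μ |x̂_i - x_j|²`, hence
`|x̂_i - x̂_j|² = 1/m_{ij}` and `|T_j|² = 1/μ`. -/
theorem discrete_bicycle_step (xi xj xhi xhj : ℍ[ℝ]) (m μ : ℝ)
    (hm : 0 < m) (hμ : 0 < μ)
    (hx : xi ≠ xj) (hne : xhi ≠ xj)
    (Ti Tj : ℍ[ℝ]) (hTi : Ti = xhi - xi) (hTj : Tj = xhj - xj)
    (hTi0 : Ti ≠ 0)
    (harc : Quaternion.normSq (xi - xj) = 1 / m)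
    (hric : xhi - xhj = μ • (Tj * star (xi - xj) * Ti))
    (hTimu : Quaternion.normSq Ti = 1 / μ) :
    Quaternion.normSq (1 + μ • (star (xi - xj) * Ti))
        = μ * Quaternion.normSq (xhi - xj) ∧
      Quaternion.normSq (xhi - xhj) = 1 / m ∧
      Quaternion.normSq Tj = 1 / μ := by
  set dx := xi - xj with hdx
  have hsum : xhi - xj = Ti + dx := by rw [hTi, hdx]; abel
  -- first identity
  have h1 : Quaternion.normSq (1 + μ • (star dx * Ti))
      = μ * Quaternion.normSq (xhi - xj) := by
    rw [hsum, Quaternion.normSq_add, Quaternion.normSq_add,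
      Quaternion.normSq_smul, map_one Quaternion.normSq, map_mul,
      Quaternion.normSq_star, harc, hTimu]
    have hre : (1 * star (μ • (star dx * Ti))).re = μ * (Ti * star dx).re := by
      simp [Quaternion.re_mul, Quaternion.re_smul, Quaternion.re_star,
        Quaternion.imI_smul, Quaternion.imJ_smul, Quaternion.imK_smul]
    rw [hre]
    field_simp
  refine ⟨h1, ?_⟩
  -- key multiplicative relation
  have key : Tj * (1 + μ • (star dx * Ti)) = Ti + dx := by
    have : Tj * (1 + μ • (star dx * Ti)) = Tj + (μ • (Tj * star dx * Ti)) := by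
      rw [mul_add, mul_one, mul_smul_comm, mul_assoc]
    rw [this, ← hric, hTj, ← hsum]; abel
  have hN : Quaternion.normSq (xhi - xj) ≠ 0 := by
    rw [Quaternion.normSq_ne_zero, sub_ne_zero]; exact hne
  have hkey : Quaternion.normSq Tj * Quaternion.normSq (1 + μ • (star dx * Ti))
      = Quaternion.normSq (xhi - xj) := by
    rw [← map_mul, key, hsum]
  have hTjμ : Quaternion.normSq Tj = 1 / μ := by
    rw [h1] at hkey
    field_simp at hkey ⊢
    have := mul_right_cancel₀ hN (by rw [hkey] : Quaternion.normSq Tj * μ * Quaternion.normSq (xhi - xj) = 1 * Quaternion.normSq (xhi - xj))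
    linarith [this]
  refine ⟨?_, hTjμ⟩
  rw [hric, Quaternion.normSq_smul, map_mul, map_mul, Quaternion.normSq_star,
    harc, hTimu, hTjμ]
  field_simp
end
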